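/- arXiv:1701.04956 — 2 statements merged into one kernel-verified Lean document; each statement's English description precedes it below -/
import Mathlib

section
/- A φ-orbit of I_n contains at most two symmetrical independent sets: if S, T, U ∈ I_n are symmetrical (S^rev = S, T^rev = T, U^rev = U) and lie in a common φ-orbit (i.e., T = φ^a(S) and U = φ^b(S) for some integers a, b ≥ 0), then S, T, U are not pairwise distinct. -/
/-- An independent set of the path graph `P_n` (vertices `1,…,n`, edges `{i,i+1}`):
a subset of `{1,…,n}` containing no two adjacent vertices. -/
def IndepSet (n : ℕ) (S : Finset ℕ) : Prop :=
  S ⊆ Finset.Icc 1 n ∧ ∀ i ∈ S, i + 1 ∉ S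

instance (n : ℕ) (S : Finset ℕ) : Decidable (IndepSet n S) := by
  unfold IndepSet; infer_instance

/-- The toggle `τ_i` acting on independent sets of the path graph `P_n`. -/
def toggle (n i : ℕ) (S : Finset ℕ) : Finset ℕ :=
  if i ∈ S then S.erase i
  else if IndepSet n (insert i S) then insert i S
  else S

/-- `φ = τ_n ∘ ⋯ ∘ τ_2 ∘ τ_1` (toggle at each vertex from left to right). -/
def phi (n : ℕ) (S : Finset ℕ) : Finset ℕ :=
  (List.range n).foldl (fun T k => toggle n (k + 1) T) S

/-- `φ⁻¹ = τ_1 ∘ τ_2 ∘ ⋯ ∘ τ_n` (toggle at each vertex from right to left). -/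
def phiInv (n : ℕ) (S : Finset ℕ) : Finset ℕ :=
  (List.range n).foldr (fun k T => toggle n (k + 1) T) S

/-- The reverse `S^rev = {n+1−i : i ∈ S}` of an independent set. -/
def revSet (n : ℕ) (S : Finset ℕ) : Finset ℕ := S.image fun i => n + 1 - i

lemma toggle_indep {n i : ℕ} {S : Finset ℕ} (hS : IndepSet n S) :
    IndepSet n (toggle n i S) := by
  unfold toggle
  split_ifs with h1 h2
  · exact ⟨(Finset.erase_subset i S).trans hS.1, fun j hj hj' =>
      hS.2 j (Finset.mem_of_mem_erase hj) (Finset.mem_of_mem_erase hj')⟩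
  · exact h2
  · exact hS

lemma toggle_subset {n i : ℕ} {S : Finset ℕ} (hS : S ⊆ Finset.Icc 1 n) :
    toggle n i S ⊆ Finset.Icc 1 n := by
  unfold toggle
  split_ifs with h1 h2
  · exact (Finset.erase_subset i S).trans hS
  · exact h2.1
  · exact hS

lemma toggle_toggle {n i : ℕ} {S : Finset ℕ} (hS : IndepSet n S) :
    toggle n i (toggle n i S) = S := by
  unfold toggle
  by_cases h1 : i ∈ S
  · simp only [h1, if_pos]
    have h2 : i ∉ S.erase i := Finset.notMem_erase i S
    have h3 : insert i (S.erase i) = S := Finset.insert_erase h1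
    simp [h2, h3, hS]
  · simp only [h1, if_neg, if_false]
    by_cases h2 : IndepSet n (insert i S)
    · simp [h2, Finset.mem_insert_self, Finset.erase_insert h1]
    · simp [h1, h2]

lemma foldl_indep {n : ℕ} : ∀ (l : List ℕ) {S : Finset ℕ}, IndepSet n S →
    IndepSet n (l.foldl (fun T k => toggle n (k + 1) T) S) := by
  intro l
  induction l with
  | nil => intro S hS; exact hS
  | cons a l ih => intro S hS; exact ih (toggle_indep hS)

lemma foldr_indep {n : ℕ} : ∀ (l : List ℕ) {S : Finset ℕ}, IndepSet n S →
    IndepSet n (l.foldr (fun k T => toggle n (k + 1) T) S) := by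
  intro l
  induction l with
  | nil => intro S hS; exact hS
  | cons a l ih => intro S hS; exact toggle_indep (ih hS)

lemma phi_indep {n : ℕ} {S : Finset ℕ} (hS : IndepSet n S) : IndepSet n (phi n S) :=
  foldl_indep _ hS

lemma phiInv_indep {n : ℕ} {S : Finset ℕ} (hS : IndepSet n S) : IndepSet n (phiInv n S) :=
  foldr_indep _ hS

lemma foldr_foldl {n : ℕ} : ∀ (l : List ℕ) {S : Finset ℕ}, IndepSet n S →
    l.foldr (fun k T => toggle n (k + 1) T)
      (l.foldl (fun T k => toggle n (k + 1) T) S) = S := by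
  intro l
  induction l with
  | nil => intro S _; rfl
  | cons a l ih =>
      intro S hS
      simp only [List.foldl_cons, List.foldr_cons]
      rw [ih (toggle_indep hS), toggle_toggle hS]

lemma foldl_foldr {n : ℕ} : ∀ (l : List ℕ) {S : Finset ℕ}, IndepSet n S →
    l.foldl (fun T k => toggle n (k + 1) T)
      (l.foldr (fun k T => toggle n (k + 1) T) S) = S := by
  intro l
  induction l with
  | nil => intro S _; rfl
  | cons a l ih =>
      intro S hS
      simp only [List.foldl_cons, List.foldr_cons]
      rw [toggle_toggle (foldr_indep l hS), ih hS]

lemma phiInv_phi {n : ℕ} {S : Finset ℕ} (hS : IndepSet n S) : phiInv n (phi n S) = S :=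
  foldr_foldl _ hS

lemma phi_phiInv {n : ℕ} {S : Finset ℕ} (hS : IndepSet n S) : phi n (phiInv n S) = S :=
  foldl_foldr _ hS

lemma phiInv_iter_indep {n : ℕ} {S : Finset ℕ} (hS : IndepSet n S) (a : ℕ) :
    IndepSet n ((phiInv n)^[a] S) := by
  induction a with
  | zero => exact hS
  | succ a ih => rw [Function.iterate_succ_apply' (phiInv n)]; exact phiInv_indep ih

lemma phi_iter_indep {n : ℕ} {S : Finset ℕ} (hS : IndepSet n S) (a : ℕ) :
    IndepSet n ((phi n)^[a] S) := by
  induction a with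
  | zero => exact hS
  | succ a ih => rw [Function.iterate_succ_apply' (phi n)]; exact phi_indep ih

lemma phi_iter_phiInv_iter {n : ℕ} {S : Finset ℕ} (hS : IndepSet n S) (a : ℕ) :
    (phi n)^[a] ((phiInv n)^[a] S) = S := by
  induction a with
  | zero => rfl
  | succ a ih =>
      rw [Function.iterate_succ_apply' (phiInv n), Function.iterate_succ_apply (phi n),
        phi_phiInv (phiInv_iter_indep hS a)]
      exact ih

lemma rev_subset {n : ℕ} {S : Finset ℕ} (hS : S ⊆ Finset.Icc 1 n) :
    revSet n S ⊆ Finset.Icc 1 n := by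
  intro j hj
  simp only [revSet, Finset.mem_image] at hj
  obtain ⟨k, hk, rfl⟩ := hj
  have := Finset.mem_Icc.mp (hS hk)
  simp only [Finset.mem_Icc]
  omega

lemma rev_rev {n : ℕ} {S : Finset ℕ} (hS : S ⊆ Finset.Icc 1 n) :
    revSet n (revSet n S) = S := by
  ext j
  simp only [revSet, Finset.mem_image]
  constructor
  · rintro ⟨x, ⟨k, hk, rfl⟩, rfl⟩
    have := Finset.mem_Icc.mp (hS hk)
    have : n + 1 - (n + 1 - k) = k := by omega
    rwa [this]
  · intro hj
    have := Finset.mem_Icc.mp (hS hj)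
    exact ⟨n + 1 - j, ⟨j, hj, rfl⟩, by omega⟩

lemma rev_insert {n i : ℕ} {S : Finset ℕ} :
    revSet n (insert i S) = insert (n + 1 - i) (revSet n S) := by
  simp [revSet, Finset.image_insert]

lemma mem_rev_iff {n i : ℕ} {S : Finset ℕ} (hS : S ⊆ Finset.Icc 1 n)
    (h1 : 1 ≤ i) (h2 : i ≤ n) : n + 1 - i ∈ revSet n S ↔ i ∈ S := by
  simp only [revSet, Finset.mem_image]
  constructor
  · rintro ⟨k, hk, hki⟩
    have := Finset.mem_Icc.mp (hS hk)
    have : k = i := by omega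
    rwa [← this]
  · intro h; exact ⟨i, h, rfl⟩

lemma rev_erase {n i : ℕ} {S : Finset ℕ} (hS : S ⊆ Finset.Icc 1 n)
    (h1 : 1 ≤ i) (h2 : i ≤ n) :
    revSet n (S.erase i) = (revSet n S).erase (n + 1 - i) := by
  ext j
  simp only [revSet, Finset.mem_image, Finset.mem_erase]
  constructor
  · rintro ⟨k, ⟨hki, hk⟩, rfl⟩
    have := Finset.mem_Icc.mp (hS hk)
    exact ⟨by omega, k, hk, rfl⟩
  · rintro ⟨hji, k, hk, rfl⟩
    have := Finset.mem_Icc.mp (hS hk)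
    exact ⟨k, ⟨by omega, hk⟩, rfl⟩

lemma rev_indep {n : ℕ} {S : Finset ℕ} (hS : IndepSet n S) : IndepSet n (revSet n S) := by
  refine ⟨rev_subset hS.1, ?_⟩
  intro j hj hj1
  simp only [revSet, Finset.mem_image] at hj hj1
  obtain ⟨k, hk, rfl⟩ := hj
  obtain ⟨k', hk', he⟩ := hj1
  have hb := Finset.mem_Icc.mp (hS.1 hk)
  have hb' := Finset.mem_Icc.mp (hS.1 hk')
  have : k' + 1 = k := by omega
  exact hS.2 k' hk' (this ▸ hk)

lemma indep_rev_iff {n : ℕ} {S : Finset ℕ} (hS : S ⊆ Finset.Icc 1 n) :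
    IndepSet n (revSet n S) ↔ IndepSet n S := by
  constructor
  · intro h
    have := rev_indep h
    rwa [rev_rev hS] at this
  · exact rev_indep

lemma toggle_rev {n i : ℕ} {S : Finset ℕ} (hS : S ⊆ Finset.Icc 1 n)
    (h1 : 1 ≤ i) (h2 : i ≤ n) :
    revSet n (toggle n i S) = toggle n (n + 1 - i) (revSet n S) := by
  have hmem : n + 1 - i ∈ revSet n S ↔ i ∈ S := mem_rev_iff hS h1 h2
  have hins : insert (n + 1 - i) (revSet n S) = revSet n (insert i S) := rev_insert.symm
  unfold toggle
  by_cases hiS : i ∈ S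
  · rw [if_pos hiS, if_pos (hmem.mpr hiS), rev_erase hS h1 h2]
  · rw [if_neg hiS, if_neg (fun h => hiS (hmem.mp h))]
    have hsub : insert i S ⊆ Finset.Icc 1 n ∨ True := Or.inr trivial
    by_cases hind : IndepSet n (insert i S)
    · rw [if_pos hind, if_pos (by rw [hins]; exact rev_indep hind), hins]
    · rw [if_neg hind, if_neg ?_]
      rw [hins, indep_rev_iff]
      · exact hind
      · intro j hj
        rcases Finset.mem_insert.mp hj with rfl | hj
        · simp only [Finset.mem_Icc]; omega
        · exact hS hj

lemma foldl_subset {n : ℕ} : ∀ (l : List ℕ) {S : Finset ℕ}, S ⊆ Finset.Icc 1 n →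
    l.foldl (fun T k => toggle n (k + 1) T) S ⊆ Finset.Icc 1 n := by
  intro l
  induction l with
  | nil => intro S hS; exact hS
  | cons a l ih => intro S hS; exact ih (toggle_subset hS)

lemma rev_foldl {n : ℕ} : ∀ (m : ℕ), m ≤ n → ∀ {S : Finset ℕ}, S ⊆ Finset.Icc 1 n →
    revSet n ((List.range m).foldl (fun T k => toggle n (k + 1) T) S)
      = (List.range m).foldr (fun k T => toggle n (n - m + k + 1) T) (revSet n S) := by
  intro m
  induction m with
  | zero => intro _ S _; rfl
  | succ m ih =>
      intro hmn S hS
      have hm : m ≤ n := Nat.le_of_succ_le hmn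
      conv_lhs => rw [List.range_succ, List.foldl_append]
      simp only [List.foldl_cons, List.foldl_nil]
      rw [toggle_rev (foldl_subset _ hS) (Nat.succ_le_succ (Nat.zero_le m)) hmn,
        ih hm hS]
      conv_rhs => rw [List.range_succ_eq_map, List.foldr_cons, List.foldr_map]
      have h1 : n + 1 - (m + 1) = n - (m + 1) + 0 + 1 := by omega
      have h2 : (fun k (T : Finset ℕ) => toggle n (n - (m + 1) + Nat.succ k + 1) T)
          = fun k T => toggle n (n - m + k + 1) T := by
        funext k T
        congr 1
        omega
      rw [h1, h2]

lemma rev_phi {n : ℕ} {S : Finset ℕ} (hS : S ⊆ Finset.Icc 1 n) :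
    revSet n (phi n S) = phiInv n (revSet n S) := by
  have := rev_foldl n le_rfl hS
  unfold phi phiInv
  rw [this]
  have h : (fun k (T : Finset ℕ) => toggle n (n - n + k + 1) T)
      = fun k T => toggle n (k + 1) T := by
    funext k T
    congr 1
    omega
  rw [h]

lemma phi_iter_subset {n : ℕ} {S : Finset ℕ} (hS : S ⊆ Finset.Icc 1 n) (a : ℕ) :
    (phi n)^[a] S ⊆ Finset.Icc 1 n := by
  induction a with
  | zero => exact hS
  | succ a ih => rw [Function.iterate_succ_apply' (phi n)]; exact foldl_subset _ ih

lemma rev_phi_iter {n : ℕ} {S : Finset ℕ} (hS : S ⊆ Finset.Icc 1 n) (a : ℕ) :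
    revSet n ((phi n)^[a] S) = (phiInv n)^[a] (revSet n S) := by
  induction a with
  | zero => rfl
  | succ a ih =>
      rw [Function.iterate_succ_apply' (phi n), Function.iterate_succ_apply' (phiInv n),
        rev_phi (phi_iter_subset hS a), ih]

lemma sym_iter_period {n : ℕ} {S : Finset ℕ} (hS : IndepSet n S) (hSsym : revSet n S = S)
    (c : ℕ) (hsym : revSet n ((phi n)^[c] S) = (phi n)^[c] S) :
    (phi n)^[c + c] S = S := by
  have h1 : (phi n)^[c] S = (phiInv n)^[c] S := by
    rw [← hsym, rev_phi_iter hS.1 c, hSsym]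
  rw [Function.iterate_add_apply, h1, phi_iter_phiInv_iter hS]

/-- A `φ`-orbit of `I_n` contains at most two symmetrical independent sets. -/
theorem stmt7 (n : ℕ) (hn : 2 ≤ n) (S T U : Finset ℕ)
    (hS : IndepSet n S) (hT : IndepSet n T) (hU : IndepSet n U)
    (hSsym : revSet n S = S) (hTsym : revSet n T = T) (hUsym : revSet n U = U)
    (a b : ℕ) (haT : T = (phi n)^[a] S) (hbU : U = (phi n)^[b] S) :
    ¬(S ≠ T ∧ S ≠ U ∧ T ≠ U) := by
  rintro ⟨hST, hSU, hTU⟩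
  have hTsym' : revSet n ((phi n)^[a] S) = (phi n)^[a] S := by rw [← haT]; exact hTsym
  have hUsym' : revSet n ((phi n)^[b] S) = (phi n)^[b] S := by rw [← hbU]; exact hUsym
  have hpa : Function.IsPeriodicPt (phi n) (a + a) S := sym_iter_period hS hSsym a hTsym'
  have hpb : Function.IsPeriodicPt (phi n) (b + b) S := sym_iter_period hS hSsym b hUsym'
  set p := Function.minimalPeriod (phi n) S with hp
  have hper : Function.IsPeriodicPt (phi n) p S := Function.isPeriodicPt_minimalPeriod _ _
  have hdvd_iter : ∀ c : ℕ, p ∣ c → (phi n)^[c] S = S := by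
    rintro c ⟨k, rfl⟩
    exact hper.mul_const k
  have hna : ¬ p ∣ a := fun h => hST ((haT.trans (hdvd_iter a h)).symm)
  have hnb : ¬ p ∣ b := fun h => hSU ((hbU.trans (hdvd_iter b h)).symm)
  have h2a : p ∣ a + a := hpa.minimalPeriod_dvd
  have h2b : p ∣ b + b := hpb.minimalPeriod_dvd
  obtain ⟨q, hq⟩ := h2a
  obtain ⟨q', hq'⟩ := h2b
  have hqodd : q % 2 = 1 := by
    rcases Nat.even_or_odd q with he | ho
    · exfalso; apply hna; obtain ⟨r, rfl⟩ := he
      exact ⟨r, by have h : p * (r + r) = p * r + p * r := by ring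
                   omega⟩
    · exact Nat.odd_iff.mp ho
  have hqodd' : q' % 2 = 1 := by
    rcases Nat.even_or_odd q' with he | ho
    · exfalso; apply hnb; obtain ⟨r, rfl⟩ := he
      exact ⟨r, by have h : p * (r + r) = p * r + p * r := by ring
                   omega⟩
    · exact Nat.odd_iff.mp ho
  have hpe : p % 2 = 0 := by
    have h2 : 2 ∣ p * q := ⟨a, by omega⟩
    rcases (Nat.Prime.dvd_mul Nat.prime_two).mp h2 with h | h
    · omega
    · omega
  have hq2 : p * q = 2 * (p * (q / 2)) + p := by
    have hqe : q = 2 * (q / 2) + 1 := by omega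
    calc p * q = p * (2 * (q / 2) + 1) := by rw [← hqe]
    _ = 2 * (p * (q / 2)) + p := by ring
  have hq2' : p * q' = 2 * (p * (q' / 2)) + p := by
    have hqe : q' = 2 * (q' / 2) + 1 := by omega
    calc p * q' = p * (2 * (q' / 2) + 1) := by rw [← hqe]
    _ = 2 * (p * (q' / 2)) + p := by ring
  have key : ∀ (c r : ℕ), c = p / 2 + p * r → (phi n)^[c] S = (phi n)^[p / 2] S := by
    intro c r hc
    rw [hc, Function.iterate_add_apply, hdvd_iter _ ⟨r, rfl⟩]
  have ha2 : a = p / 2 + p * (q / 2) := by omega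
  have hb2 : b = p / 2 + p * (q' / 2) := by omega
  exact hTU (by rw [haT, hbU, key a (q / 2) ha2, key b (q' / 2) hb2])
end

section
/- Let S ∈ I_n and j ∈ {1,…,n}, and suppose j ∈ S and j−1 ∈ φ^2(S). Then: (1) if j+2 ∈ S, then j+1 ∈ φ^2(S); (2) if j+1 ∈ φ(S), then j ∈ φ^3(S); (3) if j = n, then n ∈ φ^3(S). -/
def phiP (n m : ℕ) (S : Finset ℕ) : Finset ℕ :=
  (List.range m).foldl (fun T k => toggle n (k + 1) T) S

lemma phiP_succ (n m : ℕ) (S : Finset ℕ) :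
    phiP n (m + 1) S = toggle n (m + 1) (phiP n m S) := by
  simp [phiP, List.range_succ]

lemma indep_mono {n : ℕ} {S T : Finset ℕ} (h : T ⊆ S) (hS : IndepSet n S) : IndepSet n T :=
  ⟨h.trans hS.1, fun i hi hi1 => hS.2 i (h hi) (h hi1)⟩

lemma mem_toggle_of_ne {n i k : ℕ} {S : Finset ℕ} (h : k ≠ i) :
    k ∈ toggle n i S ↔ k ∈ S := by
  unfold toggle
  split_ifs <;> simp [h, Finset.mem_erase, Finset.mem_insert]

lemma mem_phiP_of_lt {n m k : ℕ} {S : Finset ℕ} (h : m < k) : k ∈ phiP n m S ↔ k ∈ S := by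
  induction m with
  | zero => simp [phiP]
  | succ m ih => rw [phiP_succ, mem_toggle_of_ne (by omega), ih (by omega)]

lemma mem_phiP_stable {n k m m' : ℕ} {S : Finset ℕ} (hk : k ≤ m) (hm : m ≤ m') :
    k ∈ phiP n m' S ↔ k ∈ phiP n m S := by
  induction m', hm using Nat.le_induction with
  | base => rfl
  | succ m' hm ih => rw [phiP_succ, mem_toggle_of_ne (by omega), ih]

lemma phiP_indep {n m : ℕ} {S : Finset ℕ} (hS : IndepSet n S) : IndepSet n (phiP n m S) := by
  induction m with
  | zero => exact hS
  | succ m ih => rw [phiP_succ]; exact toggle_indep ih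

lemma phi_eq (n : ℕ) (S : Finset ℕ) : phi n S = phiP n n S := rfl

lemma mem_phi_iff {n : ℕ} {S : Finset ℕ} (hS : IndepSet n S) {i : ℕ}
    (h1 : 1 ≤ i) (h2 : i ≤ n) :
    i ∈ phi n S ↔ (i ∉ S ∧ i - 1 ∉ phi n S ∧ i + 1 ∉ S) := by
  obtain ⟨m, rfl⟩ : ∃ m, i = m + 1 := ⟨i - 1, by omega⟩
  simp only [Nat.add_sub_cancel]
  have hTi : IndepSet n (phiP n m S) := phiP_indep hS
  set T := phiP n m S with hTdef
  have e1 : m + 1 ∈ phi n S ↔ m + 1 ∈ phiP n (m + 1) S := by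
    rw [phi_eq]; exact mem_phiP_stable le_rfl h2
  have e2 : m + 2 ∈ T ↔ m + 2 ∈ S := mem_phiP_of_lt (by omega)
  have e3 : m + 1 ∈ T ↔ m + 1 ∈ S := mem_phiP_of_lt (by omega)
  have e4 : m ∈ phi n S ↔ m ∈ T := by
    rcases Nat.eq_zero_or_pos m with h | h
    · subst h
      constructor
      · intro h0
        have := (phi_indep hS).1 h0
        simp [Finset.mem_Icc] at this
      · intro h0
        have := hTi.1 h0
        simp [Finset.mem_Icc] at this
    · rw [phi_eq]; exact mem_phiP_stable le_rfl (by omega)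
  rw [e1, phiP_succ, ← hTdef]
  by_cases hmem : m + 1 ∈ S
  · have hmT : m + 1 ∈ T := e3.2 hmem
    rw [toggle, if_pos hmT]
    simp [Finset.mem_erase, hmem]
  · have hmT : m + 1 ∉ T := fun h => hmem (e3.1 h)
    rw [toggle, if_neg hmT]
    by_cases hind : IndepSet n (insert (m + 1) T)
    · rw [if_pos hind]
      constructor
      · intro _
        refine ⟨hmem, ?_, ?_⟩
        · rw [e4]
          intro hmTm
          exact hind.2 m (Finset.mem_insert_of_mem hmTm) (Finset.mem_insert_self _ _)
        · intro hS2
          exact hind.2 (m + 1) (Finset.mem_insert_self _ _)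
            (Finset.mem_insert_of_mem (e2.2 hS2))
      · intro _; exact Finset.mem_insert_self _ _
    · rw [if_neg hind]
      constructor
      · intro h; exact absurd h hmT
      · rintro ⟨-, hm1, hm2⟩
        exfalso
        apply hind
        constructor
        · intro a ha
          rcases Finset.mem_insert.1 ha with rfl | ha
          · exact Finset.mem_Icc.2 ⟨h1, h2⟩
          · exact hTi.1 ha
        · intro a ha ha1
          rcases Finset.mem_insert.1 ha with rfl | ha
          · rcases Finset.mem_insert.1 ha1 with h' | h'
            · omega
            · exact hm2 (e2.1 h')
          · rcases Finset.mem_insert.1 ha1 with h' | h'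
            · have : a = m := by omega
              subst this
              exact hm1 (e4.2 ha)
            · exact hTi.2 a ha h'

/-- Suppose `j ∈ S` and `j−1 ∈ φ²(S)`. Then: (1) if `j+2 ∈ S` then `j+1 ∈ φ²(S)`;
(2) if `j+1 ∈ φ(S)` then `j ∈ φ³(S)`; (3) if `j = n` then `n ∈ φ³(S)`. -/
theorem stmt10 (n : ℕ) (hn : 2 ≤ n) (S : Finset ℕ) (hS : IndepSet n S)
    (j : ℕ) (hj1 : 1 ≤ j) (hjn : j ≤ n) (hjS : j ∈ S)
    (h2 : j - 1 ∈ (phi n)^[2] S) :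
    (j + 2 ∈ S → j + 1 ∈ (phi n)^[2] S)
    ∧ (j + 1 ∈ phi n S → j ∈ (phi n)^[3] S)
    ∧ (j = n → n ∈ (phi n)^[3] S) := by
  simp only [Function.iterate_succ, Function.iterate_zero, Function.comp_apply, id_eq]
    at h2 ⊢
  have hB : IndepSet n (phi n S) := phi_indep hS
  have hC : IndepSet n (phi n (phi n S)) := phi_indep hB
  have hj2 : 2 ≤ j := by
    have := Finset.mem_Icc.1 (hC.1 h2); omega
  have hjj : j - 1 + 1 = j := by omega
  -- j ∉ φ²(S), since j-1 ∈ φ²(S)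
  have hjC : j ∉ phi n (phi n S) :=
    fun h => ((mem_phi_iff hB hj1 hjn).mp h).2.1 h2
  -- j-1 ∉ φ³(S), since j-1 ∈ φ²(S)
  have hjmD : j - 1 ∉ phi n (phi n (phi n S)) :=
    fun h => ((mem_phi_iff hC (by omega) (by omega)).mp h).1 h2
  refine ⟨?_, ?_, ?_⟩
  · intro h22
    have hj2n : j + 2 ≤ n := (Finset.mem_Icc.1 (hS.1 h22)).2
    have hB2 : j + 2 ∉ phi n S :=
      fun h => ((mem_phi_iff hS (by omega) hj2n).mp h).1 h22
    have hB1 : j + 1 ∉ phi n S :=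
      fun h => ((mem_phi_iff hS (by omega) (by omega)).mp h).2.2 h22
    exact (mem_phi_iff hB (by omega) (by omega)).mpr
      ⟨hB1, by simpa using hjC, hB2⟩
  · intro hB1'
    have hj1n : j + 1 ≤ n := (Finset.mem_Icc.1 (hB.1 hB1')).2
    have hj1C : j + 1 ∉ phi n (phi n S) :=
      fun h => ((mem_phi_iff hB (by omega) hj1n).mp h).1 hB1'
    exact (mem_phi_iff hC hj1 hjn).mpr ⟨hjC, hjmD, hj1C⟩
  · intro hjeq
    subst hjeq
    have hj1C : j + 1 ∉ phi j (phi j S) := by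
      intro h
      have := Finset.mem_Icc.1 (hC.1 h); omega
    exact (mem_phi_iff hC hj1 le_rfl).mpr ⟨hjC, hjmD, hj1C⟩
end
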